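/- Let α ∈ (0,1), δ ∈ (0,1/2), and let ω be a density matrix on a finite-dimensional Hilbert space A. Then there exists an operator Λ on A with 0 ≤ Λ ≤ I_A, commuting with ω, such that Tr[Λ ω Λ] ≥ 1 − 2δ and −log λ_min(Λ ω Λ) ≤ H_α^δ(ω) + (1/(1−α))·log(1/δ), where λ_min denotes the smallest nonzero eigenvalue and H_α^δ(ω) := min{ H_α(τ) : τ a density matrix with (1/2)‖ω − τ‖₁ ≤ δ }. -/

import Mathlib

open scoped Matrix Kronecker BigOperators ENNReal ComplexOrder Classical

noncomputable section

variable {d : Type*} [Fintype d] [DecidableEq d]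

/-- Apply a real function to the eigenvalues of a Hermitian matrix (spectral
functional calculus). -/
def herFun {A : Matrix d d ℂ} (hA : A.IsHermitian) (f : ℝ → ℝ) : Matrix d d ℂ :=
  (hA.eigenvectorUnitary : Matrix d d ℂ) *
    Matrix.diagonal (fun i => (f (hA.eigenvalues i) : ℂ)) *
    (hA.eigenvectorUnitary : Matrix d d ℂ)ᴴ

/-- Functional calculus, extended by the junk value `0` to non-Hermitian matrices. -/
def matFun (A : Matrix d d ℂ) (f : ℝ → ℝ) : Matrix d d ℂ :=
  if h : A.IsHermitian then herFun h f else 0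

/-- Real power of a Hermitian matrix, taken on its support (Moore–Penrose
convention: zero eigenvalues are sent to zero; negative powers are pseudo-inverses). -/
def matPow (A : Matrix d d ℂ) (r : ℝ) : Matrix d d ℂ :=
  matFun A (fun x => if x = 0 then 0 else Real.rpow x r)

/-- Logarithm of a Hermitian matrix on its support. -/
def matLog (A : Matrix d d ℂ) : Matrix d d ℂ := matFun A Real.log

/-- A density matrix: positive semidefinite with unit trace. -/
def IsDensity (A : Matrix d d ℂ) : Prop := A.PosSemidef ∧ A.trace = 1

/-- `suppLE ρ σ` : the support of `ρ` is contained in the support of `σ`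
(for Hermitian matrices this is equivalent to `ker σ ≤ ker ρ`). -/
def suppLE (ρ σ : Matrix d d ℂ) : Prop :=
  LinearMap.ker σ.mulVecLin ≤ LinearMap.ker ρ.mulVecLin

/-- Trace (nuclear) norm of a matrix: `Tr √(AᴴA)`. -/
def traceNorm (A : Matrix d d ℂ) : ℝ := (Matrix.trace (matPow (Aᴴ * A) (1/2))).re

/-- The real-valued collision quantity `Tr[ρ σ^{-1/2} ρ σ^{-1/2}]`. -/
def Q2R (ρ σ : Matrix d d ℂ) : ℝ :=
  (Matrix.trace (ρ * matPow σ (-(1/2)) * ρ * matPow σ (-(1/2)))).re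

/-- `Q₂(ρ‖σ) = Tr[ρ σ^{-1/2} ρ σ^{-1/2}]`, equal to `+∞` unless `supp ρ ⊆ supp σ`. -/
def Q2 (ρ σ : Matrix d d ℂ) : ℝ≥0∞ :=
  if suppLE ρ σ then ENNReal.ofReal (Q2R ρ σ) else ∞

/-- Collision relative entropy `D₂(ρ‖σ) = log Q₂(ρ‖σ)`. -/
def D2 (ρ σ : Matrix d d ℂ) : EReal := ENNReal.log (Q2 ρ σ)

/-- Fidelity `F(ρ,σ) = ‖√ρ √σ‖₁`. -/
def fidelity (ρ σ : Matrix d d ℂ) : ℝ := traceNorm (matPow ρ (1/2) * matPow σ (1/2))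

/-- Purified distance `P(ρ,σ) = √(1 - F(ρ,σ)²)`. -/
def purifiedDist (ρ σ : Matrix d d ℂ) : ℝ := Real.sqrt (1 - fidelity ρ σ ^ 2)

/-- Max relative entropy `D_max(ρ‖σ) = log inf{t ≥ 0 : ρ ≤ t·σ}` (`+∞` if no such `t`). -/
def Dmax (ρ σ : Matrix d d ℂ) : EReal :=
  ENNReal.log (sInf {t : ℝ≥0∞ | t ≠ ∞ ∧ (t.toReal • σ - ρ).PosSemidef})

/-- The smallest nonzero eigenvalue of a matrix. -/
def lambdaMinPos (M : Matrix d d ℂ) : ℝ :=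
  sInf {x : ℝ | x ≠ 0 ∧ (x : ℂ) ∈ spectrum ℂ M}

variable {A B : Type*} [Fintype A] [DecidableEq A] [Fintype B] [DecidableEq B]

/-- Partial trace over the second tensor factor. -/
def ptrace2 (ρ : Matrix (A × B) (A × B) ℂ) : Matrix A A ℂ :=
  Matrix.of fun i j => ∑ b : B, ρ (i, b) (j, b)

/-- Max mutual information `I_max(A:B)_ρ = min_σ D_max(ρ ‖ ρ^A ⊗ σ)`. -/
def Imax (ρ : Matrix (A × B) (A × B) ℂ) : EReal :=
  ⨅ σ : {σ : Matrix B B ℂ // IsDensity σ}, Dmax ρ (ptrace2 ρ ⊗ₖ σ.1)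

/-- Optimized conditional min-entropy `H_min(A|B)_ρ = −min_σ D_max(ρ ‖ I_A ⊗ σ)`. -/
def Hmin (ρ : Matrix (A × B) (A × B) ℂ) : EReal :=
  -(⨅ σ : {σ : Matrix B B ℂ // IsDensity σ}, Dmax ρ ((1 : Matrix A A ℂ) ⊗ₖ σ.1))

/-- Smoothed max mutual information
`I_max^ε(A:B)_ρ = min { I_max(A:B)_ρ' : (1/2)‖ρ − ρ'‖₁ ≤ ε }`. -/
def ImaxSmooth (ε : ℝ) (ρ : Matrix (A × B) (A × B) ℂ) : EReal :=
  ⨅ ρ' : {ρ' : Matrix (A × B) (A × B) ℂ //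
      IsDensity ρ' ∧ (1/2) * traceNorm (ρ - ρ') ≤ ε}, Imax ρ'.1

/-- Rényi entropy of order `α`: `H_α(τ) = (1/(1−α))·log Tr[τ^α]`. -/
def renyiEntropy (α : ℝ) (τ : Matrix d d ℂ) : ℝ :=
  (1 / (1 - α)) * Real.log ((matPow τ α).trace.re)

/-- Smoothed Rényi entropy `H_α^δ(ω) = min { H_α(τ) : (1/2)‖ω − τ‖₁ ≤ δ }`. -/
def renyiSmooth (α δ : ℝ) (ω : Matrix d d ℂ) : ℝ :=
  sInf {y : ℝ | ∃ τ : Matrix d d ℂ,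
    IsDensity τ ∧ (1/2) * traceNorm (ω - τ) ≤ δ ∧ y = renyiEntropy α τ}

/-!
Let `t` be the right-hand side of the bound, `λ = exp (-t)`, and let `Λ` be
the spectral projection of `ω` onto its eigenvalues `≥ λ`. Then every nonzero
eigenvalue of `ΛωΛ` is `≥ λ`, and `Tr[ΛωΛ] ≥ 1 - ∑ᵢ min(pᵢ, λ)` for the
eigenvalues `pᵢ` of `ω`. For any density `τ` with eigenvalues `qⱼ` and
`½‖ω − τ‖₁ ≤ δ` one has `∑ᵢ min(pᵢ, λ) ≤ ∑ⱼ min(qⱼ, λ) + δ`, and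
`min(q, λ) ≤ q^α λ^(1-α)` gives
`∑ⱼ min(qⱼ, λ) ≤ λ^(1-α) Tr τ^α = λ^(1-α) e^((1-α) H_α(τ))`.
Taking the infimum over `τ`, the choice of `λ` makes this last term exactly `δ`.
-/

open Matrix

section herFun

variable {M : Matrix d d ℂ} (hM : M.IsHermitian)

lemma eigenvectorUnitary_conjTranspose_mul_self :
    (hM.eigenvectorUnitary : Matrix d d ℂ)ᴴ * hM.eigenvectorUnitary = 1 :=
  Unitary.coe_star_mul_self hM.eigenvectorUnitary

lemma eigenvectorUnitary_mul_conjTranspose_self :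
    (hM.eigenvectorUnitary : Matrix d d ℂ) * (hM.eigenvectorUnitary : Matrix d d ℂ)ᴴ = 1 :=
  Unitary.coe_mul_star_self hM.eigenvectorUnitary

lemma herFun_congr {f g : ℝ → ℝ} (h : ∀ i, f (hM.eigenvalues i) = g (hM.eigenvalues i)) :
    herFun hM f = herFun hM g := by
  simp only [herFun, h]

lemma herFun_mul (f g : ℝ → ℝ) :
    herFun hM f * herFun hM g = herFun hM (fun x => f x * g x) := by
  simp only [herFun, Matrix.mul_assoc]
  rw [← Matrix.mul_assoc _ (hM.eigenvectorUnitary : Matrix d d ℂ),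
    eigenvectorUnitary_conjTranspose_mul_self, Matrix.one_mul,
    ← Matrix.mul_assoc (diagonal _), diagonal_mul_diagonal]
  push_cast
  rfl

lemma herFun_add (f g : ℝ → ℝ) :
    herFun hM (fun x => f x + g x) = herFun hM f + herFun hM g := by
  simp only [herFun, ← Matrix.add_mul, ← Matrix.mul_add, diagonal_add]
  push_cast
  rfl

lemma herFun_sub (f g : ℝ → ℝ) :
    herFun hM (fun x => f x - g x) = herFun hM f - herFun hM g := by
  simp only [herFun, ← Matrix.sub_mul, ← Matrix.mul_sub, diagonal_sub]
  push_cast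
  rfl

lemma herFun_const (c : ℝ) : herFun hM (fun _ => c) = (c : ℂ) • 1 := by
  rw [herFun, ← smul_one_eq_diagonal, Matrix.mul_smul, Matrix.mul_one, Matrix.smul_mul,
    eigenvectorUnitary_mul_conjTranspose_self]

lemma herFun_one : herFun hM (fun _ => 1) = 1 := by
  simpa using herFun_const hM 1

lemma herFun_id : herFun hM (fun x => x) = M :=
  hM.spectral_theorem.symm

lemma herFun_mul_mul_herFun (f g : ℝ → ℝ) :
    herFun hM f * M * herFun hM g = herFun hM (fun x => f x * x * g x) := by
  have hM_eq : herFun hM f * M * herFun hM g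
      = herFun hM f * herFun hM (fun x => x) * herFun hM g := by
    rw [herFun_id]
  rw [hM_eq, herFun_mul, herFun_mul]

lemma herFun_mul_eq_mul_herFun (f : ℝ → ℝ) : herFun hM f * M = M * herFun hM f := by
  have h := herFun_mul hM f (fun x => x)
  rwa [herFun_id, funext fun x => mul_comm (f x) x, ← herFun_mul, herFun_id] at h

lemma re_trace_herFun (f : ℝ → ℝ) :
    (herFun hM f).trace.re = ∑ i, f (hM.eigenvalues i) := by
  rw [herFun, trace_mul_cycle, eigenvectorUnitary_conjTranspose_mul_self, Matrix.one_mul,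
    trace_diagonal, Complex.re_sum]
  rfl

lemma herFun_posSemidef {f : ℝ → ℝ} (hf : ∀ i, 0 ≤ f (hM.eigenvalues i)) :
    (herFun hM f).PosSemidef :=
  (posSemidef_diagonal_iff.mpr fun i => Complex.zero_le_real.mpr (hf i)).mul_mul_conjTranspose_same
    _

lemma spectrum_herFun (f : ℝ → ℝ) :
    spectrum ℂ (herFun hM f) = Set.range (fun i => (f (hM.eigenvalues i) : ℂ)) := by
  have := Unitary.spectrum_star_right_conjugate (R := ℂ) (U := hM.eigenvectorUnitary)
    (a := diagonal (fun i => (f (hM.eigenvalues i) : ℂ)))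
  rw [herFun, ← star_eq_conjTranspose, this, spectrum_diagonal]

end herFun

lemma matPow_eq_herFun {M : Matrix d d ℂ} (hM : M.IsHermitian) (r : ℝ) :
    matPow M r = herFun hM (fun x => if x = 0 then 0 else x ^ r) := by
  rw [matPow, matFun, dif_pos hM]
  rfl

lemma Matrix.PosSemidef.matPow_posSemidef {M : Matrix d d ℂ} (hM : M.PosSemidef) (r : ℝ) :
    (matPow M r).PosSemidef := by
  rw [matPow_eq_herFun hM.isHermitian]
  refine herFun_posSemidef _ fun i => ?_
  split_ifs
  · exact le_rfl
  · exact Real.rpow_nonneg (hM.eigenvalues_nonneg i) r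

lemma Matrix.PosSemidef.matPow_half_mul_self {M : Matrix d d ℂ} (hM : M.PosSemidef) :
    matPow M (1 / 2) * matPow M (1 / 2) = M := by
  rw [matPow_eq_herFun hM.isHermitian, herFun_mul]
  refine (herFun_congr _ fun i => ?_).trans (herFun_id _)
  split_ifs with h
  · simp [h]
  · rw [← Real.rpow_add' (hM.eigenvalues_nonneg i) (by norm_num)]
    norm_num

lemma Matrix.PosSemidef.re_trace_matPow {M : Matrix d d ℂ} (hM : M.PosSemidef) {r : ℝ}
    (hr : r ≠ 0) : (matPow M r).trace.re = ∑ i, hM.isHermitian.eigenvalues i ^ r := by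
  rw [matPow_eq_herFun hM.isHermitian, re_trace_herFun]
  refine Finset.sum_congr rfl fun i _ => ?_
  split_ifs with h
  · rw [h, Real.zero_rpow hr]
  · rfl

open scoped MatrixOrder in
lemma traceNorm_eq_sum_abs_eigenvalues {X : Matrix d d ℂ} (hX : X.IsHermitian) :
    traceNorm X = ∑ i, |hX.eigenvalues i| := by
  have hY := posSemidef_conjTranspose_mul_self X
  have habs := herFun_posSemidef hX fun i => abs_nonneg (hX.eigenvalues i)
  have hsq : herFun hX (fun x => |x|) * herFun hX (fun x => |x|) = Xᴴ * X := by
    rw [herFun_mul, herFun_congr hX (g := fun x => x * x) fun i => abs_mul_abs_self _,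
      ← herFun_mul, herFun_id, hX.eq]
  have hsqrt : matPow (Xᴴ * X) (1 / 2) = herFun hX (fun x => |x|) :=
    (CFC.mul_self_eq_mul_self_iff _ _ (hY.matPow_posSemidef _).nonneg habs.nonneg).mp
      (hY.matPow_half_mul_self.trans hsq.symm)
  rw [traceNorm, hsqrt, re_trace_herFun]

lemma traceNorm_zero : traceNorm (0 : Matrix d d ℂ) = 0 := by
  rw [traceNorm_eq_sum_abs_eigenvalues isHermitian_zero,
    (isHermitian_zero (α := ℂ)).eigenvalues_eq_zero_iff.mpr rfl]
  simp

lemma Matrix.IsHermitian.sum_eigenvalues_eq_re_trace {X : Matrix d d ℂ} (hX : X.IsHermitian) :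
    ∑ i, hX.eigenvalues i = X.trace.re := by
  simp [hX.trace_eq_sum_eigenvalues]

open scoped MatrixOrder in
lemma Matrix.PosSemidef.re_trace_mul_nonneg {P Q : Matrix d d ℂ} (hP : P.PosSemidef)
    (hQ : Q.PosSemidef) : 0 ≤ (P * Q).trace.re := by
  obtain ⟨B, rfl⟩ := CStarAlgebra.nonneg_iff_eq_star_mul_self.mp hP.nonneg
  rw [Matrix.mul_assoc, trace_mul_comm, star_eq_conjTranspose]
  exact (Complex.nonneg_iff.mp (hQ.mul_mul_conjTranspose_same B).trace_nonneg).1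

lemma Matrix.PosSemidef.re_trace_mul_le {P Y Z : Matrix d d ℂ} (hP : P.PosSemidef)
    (hP_le_one : (1 - P).PosSemidef) (hZ : Z.PosSemidef) (hYZ : (Z - Y).PosSemidef) :
    (P * Y).trace.re ≤ Z.trace.re := by
  have h₁ := hP.re_trace_mul_nonneg hYZ
  have h₂ := hP_le_one.re_trace_mul_nonneg hZ
  simp only [Matrix.mul_sub, Matrix.sub_mul, Matrix.one_mul, trace_sub, Complex.sub_re] at h₁ h₂
  linarith

lemma sum_negPart_eigenvalues_eq_half_traceNorm {X : Matrix d d ℂ} (hX : X.IsHermitian)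
    (h_trace : X.trace = 0) : ∑ i, max (-hX.eigenvalues i) 0 = 1 / 2 * traceNorm X := by
  have h_sum : ∑ i, hX.eigenvalues i = 0 := by
    rw [hX.sum_eigenvalues_eq_re_trace, h_trace, Complex.zero_re]
  have h_negPart : ∀ x : ℝ, max (-x) 0 = 1 / 2 * (|x| - x) := fun x => by
    rcases le_total 0 x with hx | hx
    · rw [max_eq_right (by linarith), abs_of_nonneg hx]; ring
    · rw [max_eq_left (by linarith), abs_of_nonpos hx]; ring
  simp only [h_negPart, ← Finset.mul_sum, Finset.sum_sub_distrib, h_sum, sub_zero,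
    traceNorm_eq_sum_abs_eigenvalues hX]

/-- The left side is `Tr[P (σ - c)]` for the spectral projection `P = 1{σ > c}`, and
`σ - c ≤ (ρ - c)₊ + (ρ - σ)₋` as operators. -/
lemma sum_posPart_eigenvalues_le {ρ σ : Matrix d d ℂ} (hρ : ρ.IsHermitian)
    (hσ : σ.IsHermitian) (c : ℝ) : ∑ j, max (hσ.eigenvalues j - c) 0 ≤
      ∑ i, max (hρ.eigenvalues i - c) 0 + ∑ k, max (-(hρ.sub hσ).eigenvalues k) 0 := by
  set P := herFun hσ (fun x => if c < x then 1 else 0)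
  have hP : P.PosSemidef := herFun_posSemidef _ fun _ => by split_ifs <;> norm_num
  have hP_le_one : (1 - P).PosSemidef := by
    rw [← herFun_one hσ, ← herFun_sub]
    exact herFun_posSemidef _ fun _ => by split_ifs <;> norm_num
  set Z := herFun hρ (fun x => max (x - c) 0) + herFun (hρ.sub hσ) (fun x => max (-x) 0)
    with hZ_def
  have hZ : Z.PosSemidef :=
    (herFun_posSemidef _ fun _ => le_max_right _ _).add
      (herFun_posSemidef _ fun _ => le_max_right _ _)
  have hσ_sub : σ - (c : ℂ) • 1 = herFun hσ (fun x => x - c) := by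
    rw [herFun_sub, herFun_id, herFun_const]
  have hZ_sub : (Z - (σ - (c : ℂ) • 1)).PosSemidef := by
    have h_eq : Z - (σ - (c : ℂ) • 1) = herFun hρ (fun x => max (x - c) 0 - (x - c)) +
        herFun (hρ.sub hσ) (fun x => max (-x) 0 + x) := by
      rw [hZ_def, herFun_sub, herFun_sub hρ (fun x => x), herFun_add, herFun_id, herFun_id,
        herFun_const]
      abel
    rw [h_eq]
    refine (herFun_posSemidef _ fun _ => ?_).add (herFun_posSemidef _ fun _ => ?_)
    · linarith [le_max_left (hρ.eigenvalues ‹_› - c) 0]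
    · linarith [le_max_left (-(hρ.sub hσ).eigenvalues ‹_›) 0]
  have h_lhs : ∑ j, max (hσ.eigenvalues j - c) 0 = (P * (σ - (c : ℂ) • 1)).trace.re := by
    rw [hσ_sub, herFun_mul, re_trace_herFun]
    refine Finset.sum_congr rfl fun j _ => ?_
    split_ifs with h
    · rw [one_mul, max_eq_left (by linarith)]
    · rw [zero_mul, max_eq_right (by linarith)]
  rw [h_lhs]
  refine (hP.re_trace_mul_le hP_le_one hZ hZ_sub).trans_eq ?_
  rw [trace_add, Complex.add_re, re_trace_herFun, re_trace_herFun]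

lemma IsDensity.sum_eigenvalues {τ : Matrix d d ℂ} (hτ : IsDensity τ) :
    ∑ i, hτ.1.isHermitian.eigenvalues i = 1 := by
  rw [hτ.1.isHermitian.sum_eigenvalues_eq_re_trace, hτ.2, Complex.one_re]

lemma IsDensity.sum_min_eigenvalues_le_add_half_traceNorm {ω τ : Matrix d d ℂ}
    (hω : IsDensity ω) (hτ : IsDensity τ) (c : ℝ) :
    ∑ i, min (hω.1.isHermitian.eigenvalues i) c ≤
      ∑ j, min (hτ.1.isHermitian.eigenvalues j) c + 1 / 2 * traceNorm (ω - τ) := by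
  have h_min : ∀ x : ℝ, min x c = x - max (x - c) 0 := fun x => by
    rcases le_total x c with h | h
    · rw [min_eq_left h, max_eq_right (by linarith)]; ring
    · rw [min_eq_right h, max_eq_left (by linarith)]; ring
  have h_trace : (ω - τ).trace = 0 := by rw [trace_sub, hω.2, hτ.2, sub_self]
  have h_key := sum_posPart_eigenvalues_le hω.1.isHermitian hτ.1.isHermitian c
  rw [sum_negPart_eigenvalues_eq_half_traceNorm _ h_trace] at h_key
  simp only [h_min, Finset.sum_sub_distrib, hω.sum_eigenvalues, hτ.sum_eigenvalues]
  linarith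

lemma min_le_rpow_mul_rpow {q c α : ℝ} (hq : 0 ≤ q) (hc : 0 ≤ c) (hα₀ : 0 ≤ α)
    (hα₁ : α ≤ 1) : min q c ≤ q ^ α * c ^ (1 - α) := by
  have hm := le_min hq hc
  calc min q c = min q c ^ α * min q c ^ (1 - α) := by
        rw [← Real.rpow_add' hm (by norm_num), add_sub_cancel, Real.rpow_one]
    _ ≤ q ^ α * c ^ (1 - α) :=
        mul_le_mul (Real.rpow_le_rpow hm (min_le_left q c) hα₀)
          (Real.rpow_le_rpow hm (min_le_right q c) (sub_nonneg.mpr hα₁))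
          (Real.rpow_nonneg hm _) (Real.rpow_nonneg hq _)

lemma IsDensity.sum_min_eigenvalues_le_rpow_mul {τ : Matrix d d ℂ} (hτ : IsDensity τ)
    {c α : ℝ} (hc : 0 ≤ c) (hα₀ : 0 < α) (hα₁ : α ≤ 1) :
    ∑ j, min (hτ.1.isHermitian.eigenvalues j) c ≤ c ^ (1 - α) * (matPow τ α).trace.re := by
  rw [hτ.1.re_trace_matPow hα₀.ne', Finset.mul_sum]
  refine Finset.sum_le_sum fun j _ => ?_
  rw [mul_comm]
  exact min_le_rpow_mul_rpow (hτ.1.eigenvalues_nonneg j) hc hα₀.le hα₁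

lemma IsDensity.one_le_re_trace_matPow {τ : Matrix d d ℂ} (hτ : IsDensity τ) {α : ℝ}
    (hα₀ : 0 < α) (hα₁ : α ≤ 1) : 1 ≤ (matPow τ α).trace.re := by
  rw [hτ.1.re_trace_matPow hα₀.ne', ← hτ.sum_eigenvalues]
  refine Finset.sum_le_sum fun i _ => Real.self_le_rpow_of_le_one (hτ.1.eigenvalues_nonneg i)
    ?_ hα₁
  rw [← hτ.sum_eigenvalues]
  exact Finset.single_le_sum (fun j _ => hτ.1.eigenvalues_nonneg j) (Finset.mem_univ i)

lemma IsDensity.renyiEntropy_nonneg {τ : Matrix d d ℂ} (hτ : IsDensity τ) {α : ℝ}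
    (hα : α ∈ Set.Ioo (0 : ℝ) 1) : 0 ≤ renyiEntropy α τ :=
  mul_nonneg (one_div_nonneg.mpr (sub_pos.mpr hα.2).le)
    (Real.log_nonneg (hτ.one_le_re_trace_matPow hα.1 hα.2.le))

lemma IsDensity.re_trace_matPow_eq_exp {τ : Matrix d d ℂ} (hτ : IsDensity τ) {α : ℝ}
    (hα : α ∈ Set.Ioo (0 : ℝ) 1) :
    (matPow τ α).trace.re = Real.exp ((1 - α) * renyiEntropy α τ) := by
  have h1α : 1 - α ≠ 0 := (sub_pos.mpr hα.2).ne'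
  rw [renyiEntropy, ← mul_assoc, mul_one_div_cancel h1α, one_mul,
    Real.exp_log (one_pos.trans_le (hτ.one_le_re_trace_matPow hα.1 hα.2.le))]

lemma IsDensity.sum_min_eigenvalues_le_renyiSmooth {ω : Matrix d d ℂ} (hω : IsDensity ω)
    {α δ c : ℝ} (hα : α ∈ Set.Ioo (0 : ℝ) 1) (hδ : 0 ≤ δ) (hc : 0 ≤ c) :
    ∑ i, min (hω.1.isHermitian.eigenvalues i) c ≤
      δ + c ^ (1 - α) * Real.exp ((1 - α) * renyiSmooth α δ ω) := by
  set S := {y : ℝ | ∃ τ : Matrix d d ℂ,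
    IsDensity τ ∧ (1/2) * traceNorm (ω - τ) ≤ δ ∧ y = renyiEntropy α τ}
  set f : ℝ → ℝ := fun y => δ + c ^ (1 - α) * Real.exp ((1 - α) * y)
  have hf_mono : Monotone f := fun y z hyz =>
    add_le_add_right (mul_le_mul_of_nonneg_left (Real.exp_le_exp.mpr
      (mul_le_mul_of_nonneg_left hyz (sub_pos.mpr hα.2).le)) (Real.rpow_nonneg hc _)) δ
  have hS_ne : S.Nonempty :=
    ⟨_, ω, hω, by rw [sub_self, traceNorm_zero, mul_zero]; exact hδ, rfl⟩
  have hS_bdd : BddBelow S :=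
    ⟨0, by rintro _ ⟨τ, hτ, -, rfl⟩; exact hτ.renyiEntropy_nonneg hα⟩
  change _ ≤ f (sInf S)
  rw [hf_mono.map_csInf_of_continuousAt (by fun_prop) hS_ne hS_bdd]
  refine le_csInf (hS_ne.image f) ?_
  rintro _ ⟨_, ⟨τ, hτ, hτ_dist, rfl⟩, rfl⟩
  have := hτ.sum_min_eigenvalues_le_rpow_mul hc hα.1 hα.2.le
  rw [hτ.re_trace_matPow_eq_exp hα] at this
  linarith [hω.sum_min_eigenvalues_le_add_half_traceNorm hτ c]

lemma le_lambdaMinPos_herFun {M : Matrix d d ℂ} (hM : M.IsHermitian) {f : ℝ → ℝ} {c : ℝ}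
    (h_ne : ∃ i, f (hM.eigenvalues i) ≠ 0) (hc : ∀ i, f (hM.eigenvalues i) ≠ 0 →
      c ≤ f (hM.eigenvalues i)) : c ≤ lambdaMinPos (herFun hM f) := by
  obtain ⟨i, hi⟩ := h_ne
  rw [lambdaMinPos, spectrum_herFun]
  refine le_csInf ⟨_, hi, i, rfl⟩ ?_
  rintro x ⟨hx, j, hj⟩
  rw [← Complex.ofReal_injective hj]
  exact hc j (Complex.ofReal_injective hj ▸ hx)

lemma IsDensity.exists_effect_of_sum_min_eigenvalues_le {ω : Matrix d d ℂ} (hω : IsDensity ω)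
    {c ε : ℝ} (hc : 0 ≤ c) (hε : ε < 1)
    (h_sum : ∑ i, min (hω.1.isHermitian.eigenvalues i) c ≤ ε) :
    ∃ Λ : Matrix d d ℂ, Λ.PosSemidef ∧ ((1 : Matrix d d ℂ) - Λ).PosSemidef ∧
      Λ * ω = ω * Λ ∧ 1 - ε ≤ (Λ * ω * Λ).trace.re ∧
      c ≤ lambdaMinPos (Λ * ω * Λ) := by
  set hH := hω.1.isHermitian
  set Λ := herFun hH (fun x => if c ≤ x then 1 else 0) with hΛ
  set g : ℝ → ℝ := fun x => if c ≤ x then x else 0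
  have hΛωΛ : Λ * ω * Λ = herFun hH g := by
    rw [hΛ, herFun_mul_mul_herFun]
    congr 1
    funext x
    split_ifs <;> simp [g, *]
  have h_trace : 1 - ε ≤ ∑ i, g (hH.eigenvalues i) := by
    have h_le : ∀ x, x - min x c ≤ g x := fun x => by
      simp only [g]
      split_ifs with h
      · linarith [le_min (hc.trans h) hc]
      · rw [min_eq_left (not_le.mp h).le, sub_self]
    have := Finset.sum_le_sum fun i (_ : i ∈ Finset.univ) => h_le (hH.eigenvalues i)
    rw [Finset.sum_sub_distrib, hω.sum_eigenvalues] at this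
    linarith
  refine ⟨Λ, herFun_posSemidef _ fun _ => by split_ifs <;> norm_num, ?_,
    herFun_mul_eq_mul_herFun _ _, by rwa [hΛωΛ, re_trace_herFun], ?_⟩
  · rw [hΛ, ← herFun_one hH, ← herFun_sub]
    exact herFun_posSemidef _ fun _ => by split_ifs <;> norm_num
  · rw [hΛωΛ]
    refine le_lambdaMinPos_herFun hH ?_ fun i hi => ?_
    · by_contra! h_zero
      simp only [h_zero, Finset.sum_const_zero] at h_trace
      linarith
    · simp only [g] at hi ⊢
      split_ifs at hi ⊢ with h
      · exact h
      · exact absurd rfl hi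

/-- **Existence of a good effect `Λ`**: there is `0 ≤ Λ ≤ I` commuting with `ω` such that
`Tr[ΛωΛ] ≥ 1 − 2δ` and `−log λ_min(ΛωΛ) ≤ H_α^δ(ω) + (1/(1−α))·log(1/δ)`. -/
theorem exists_effect_lambdaMin_bound (α δ : ℝ)
    (hα : α ∈ Set.Ioo (0 : ℝ) 1) (hδ : δ ∈ Set.Ioo (0 : ℝ) (1/2))
    (ω : Matrix d d ℂ) (hω : IsDensity ω) :
    ∃ Λ : Matrix d d ℂ, Λ.PosSemidef ∧ ((1 : Matrix d d ℂ) - Λ).PosSemidef ∧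
      Λ * ω = ω * Λ ∧
      1 - 2 * δ ≤ (Λ * ω * Λ).trace.re ∧
      -Real.log (lambdaMinPos (Λ * ω * Λ))
        ≤ renyiSmooth α δ ω + (1 / (1 - α)) * Real.log (1 / δ) := by
  set t := renyiSmooth α δ ω + (1 / (1 - α)) * Real.log (1 / δ)
  have h_sum := hω.sum_min_eigenvalues_le_renyiSmooth hα hδ.1.le (Real.exp_pos (-t)).le
  have h_exp : Real.exp (-t) ^ (1 - α) * Real.exp ((1 - α) * renyiSmooth α δ ω) = δ := by
    have h1α : 1 - α ≠ 0 := (sub_pos.mpr hα.2).ne'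
    rw [← Real.exp_mul, ← Real.exp_add]
    convert Real.exp_log hδ.1 using 2
    simp only [t, one_div, Real.log_inv]
    field_simp
    ring
  rw [h_exp] at h_sum
  obtain ⟨Λ, hΛ, hΛ_le_one, h_comm, h_trace, h_min⟩ :=
    hω.exists_effect_of_sum_min_eigenvalues_le (Real.exp_pos (-t)).le (by linarith [hδ.2]) h_sum
  refine ⟨Λ, hΛ, hΛ_le_one, h_comm, by linarith, ?_⟩
  calc -Real.log (lambdaMinPos (Λ * ω * Λ)) ≤ -Real.log (Real.exp (-t)) :=
        neg_le_neg (Real.log_le_log (Real.exp_pos _) h_min)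
    _ = t := by rw [Real.log_exp, neg_neg]
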